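/- arXiv:2503.15611 — 6 statements merged into one kernel-verified Lean document; each statement's English description precedes it below -/
import Mathlib

section
/- Let H be a complex Hilbert space, A a *-subalgebra of the algebra B(H) of bounded linear operators on H (a subalgebra closed under taking adjoints), and H₀ a dense subset of H. Let (U_λ) be a net in A, indexed by a nonempty directed set, which is uniformly bounded in operator norm, and suppose that for every ξ ∈ H₀ both nets (U_λ ξ) and (U_λ* ξ) converge in the norm of H. Then there exists an operator U belonging to the double commutant A'' such that U_λ converges to U in the strong-* operator topology; that is, U_λ ξ → U ξ and U_λ* ξ → U* ξ in norm for every ξ ∈ H. -/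
/-!
A uniformly bounded net of operators is equicontinuous, so pointwise Cauchyness passes from a
dense set to the whole space; the pointwise limits of `U l` and of `(U l)*` are then bounded
operators `V` and `W`, and passing to the limit in `⟪(U l)* η, ξ⟫ = ⟪η, U l ξ⟫` gives `W = V*`.
The commutant of any set of operators is closed under pointwise limits, and `A ⊆ A''`.
-/

open Filter Topology

theorem EquicontinuousAt.cauchy_map_of_mem_closure {ι X α : Type*} [TopologicalSpace X]
    [UniformSpace α] {l : Filter ι} [l.NeBot] {F : ι → X → α} {s : Set X} {x : X}
    (hF : EquicontinuousAt F x) (hs : ∀ y ∈ s, Cauchy (l.map (F · y))) (hx : x ∈ closure s) :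
    Cauchy (l.map (F · x)) := by
  rw [cauchy_map_iff']
  intro U hU
  obtain ⟨V, hV, hVsymm, hVU⟩ := comp_comp_symm_mem_uniformity_sets hU
  obtain ⟨y, hFy, hys⟩ := mem_closure_iff_nhds.1 hx _ (hF V hV)
  refine mem_map.2 <| mem_of_superset (mem_map.1 <| cauchy_map_iff'.1 (hs y hys) hV) fun p hp ↦ ?_
  exact hVU ⟨_, ⟨_, hFy p.1, hp⟩, SetRel.symm V (hFy p.2)⟩

theorem Equicontinuous.exists_tendsto_of_dense {ι X α : Type*} [TopologicalSpace X]
    [UniformSpace α] [CompleteSpace α] {l : Filter ι} [l.NeBot] {F : ι → X → α}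
    (hF : Equicontinuous F) {s : Set X} (hs : Dense s)
    (h : ∀ x ∈ s, ∃ y, Tendsto (F · x) l (𝓝 y)) :
    ∃ f : X → α, Tendsto F l (𝓝 f) := by
  have hcauchy : ∀ x, Cauchy (l.map (F · x)) := fun x ↦
    (hF x).cauchy_map_of_mem_closure (fun y hy ↦ (h y hy).choose_spec.cauchy_map) (hs x)
  choose f hf using fun x ↦ CompleteSpace.complete (hcauchy x)
  exact ⟨f, tendsto_pi_nhds.2 hf⟩

theorem ContinuousLinearMap.exists_tendsto_of_dense_of_norm_le {ι 𝕜 𝕜₂ E F : Type*}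
    [NontriviallyNormedField 𝕜] [NontriviallyNormedField 𝕜₂] {σ₁₂ : 𝕜 →+* 𝕜₂}
    [RingHomIsometric σ₁₂] [NormedAddCommGroup E] [NormedAddCommGroup F] [NormedSpace 𝕜 E]
    [NormedSpace 𝕜₂ F] [CompleteSpace F] {l : Filter ι} [l.NeBot] {g : ι → E →SL[σ₁₂] F}
    {C : ℝ} (hC : ∀ i, ‖g i‖ ≤ C) {s : Set E} (hs : Dense s)
    (h : ∀ x ∈ s, ∃ y, Tendsto (g · x) l (𝓝 y)) :
    ∃ T : E →SL[σ₁₂] F, ∀ x, Tendsto (g · x) l (𝓝 (T x)) := by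
  have hequi : Equicontinuous fun i x ↦ g i x :=
    ((NormedSpace.equicontinuous_TFAE g).out 5 1).1 (⟨C, hC⟩ : ∃ C, ∀ i, ‖g i‖ ≤ C)
  obtain ⟨f, hf⟩ := hequi.exists_tendsto_of_dense hs h
  exact ⟨⟨linearMapOfTendsto _ _ hf, hf.continuous_of_equicontinuous hequi⟩, tendsto_pi_nhds.1 hf⟩

theorem ContinuousLinearMap.adjoint_eq_of_tendsto {ι 𝕜 E F : Type*} [RCLike 𝕜]
    [NormedAddCommGroup E] [NormedAddCommGroup F] [InnerProductSpace 𝕜 E]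
    [InnerProductSpace 𝕜 F] [CompleteSpace E] [CompleteSpace F] {l : Filter ι} [l.NeBot]
    {g : ι → E →L[𝕜] F} {T : E →L[𝕜] F} {S : F →L[𝕜] E}
    (hT : ∀ x, Tendsto (g · x) l (𝓝 (T x)))
    (hS : ∀ y, Tendsto (fun i ↦ adjoint (g i) y) l (𝓝 (S y))) :
    adjoint T = S := by
  refine ((eq_adjoint_iff S T).2 fun y x ↦ ?_).symm
  refine tendsto_nhds_unique ((hS y).inner tendsto_const_nhds) ?_
  simpa only [adjoint_inner_left] using tendsto_const_nhds.inner (hT x)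

theorem ContinuousLinearMap.mem_centralizer_of_tendsto {ι R M : Type*} [Semiring R]
    [TopologicalSpace M] [T2Space M] [AddCommMonoid M] [Module R M] {S : Set (M →L[R] M)}
    {l : Filter ι} [l.NeBot] {g : ι → M →L[R] M} {T : M →L[R] M}
    (hg : ∀ i, g i ∈ S.centralizer) (hT : ∀ x, Tendsto (g · x) l (𝓝 (T x))) :
    T ∈ S.centralizer := by
  intro A hA
  ext x
  have hcomm : ∀ i, A (g i x) = g i (A x) := fun i ↦ DFunLike.congr_fun (hg i A hA) x
  exact tendsto_nhds_unique ((A.continuous.tendsto _).comp (hT x)) ((hT (A x)).congr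
    fun i ↦ (hcomm i).symm)

/-- Let `H` be a complex Hilbert space, `A` a *-subalgebra of `B(H)` (formalized as a
`StarSubalgebra` of the continuous linear endomorphisms of `H`), and `H₀` a dense subset
of `H`.  Let `(U l)` be a net in `A` indexed by a nonempty directed set `ι`, uniformly
bounded in operator norm, such that for every `ξ ∈ H₀` both `U l ξ` and `(U l)* ξ`
converge in norm.  Then there exists `Uop` in the double commutant `A''`
(the centralizer of the centralizer of `A` in `B(H)`) such that `U l → Uop` in the
strong-* operator topology, i.e. `U l ξ → Uop ξ` and `(U l)* ξ → Uop* ξ` for every `ξ ∈ H`. -/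
theorem strongStar_limit_exists_mem_double_commutant
    {H : Type} [NormedAddCommGroup H] [InnerProductSpace ℂ H] [CompleteSpace H]
    (A : StarSubalgebra ℂ (H →L[ℂ] H))
    (H₀ : Set H) (hdense : Dense H₀)
    {ι : Type} [Nonempty ι] [Preorder ι] [IsDirected ι (· ≤ ·)]
    (U : ι → (H →L[ℂ] H)) (hmem : ∀ l, U l ∈ A)
    (hbdd : ∃ M : ℝ, ∀ l, ‖U l‖ ≤ M)
    (hconv : ∀ ξ ∈ H₀,
      (∃ y : H, Tendsto (fun l => U l ξ) atTop (nhds y)) ∧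
      (∃ z : H, Tendsto (fun l => (ContinuousLinearMap.adjoint (U l)) ξ) atTop (nhds z))) :
    ∃ Uop : H →L[ℂ] H,
      Uop ∈ Set.centralizer (Set.centralizer (A : Set (H →L[ℂ] H))) ∧
      ∀ ξ : H,
        Tendsto (fun l => U l ξ) atTop (nhds (Uop ξ)) ∧
        Tendsto (fun l => (ContinuousLinearMap.adjoint (U l)) ξ) atTop
          (nhds ((ContinuousLinearMap.adjoint Uop) ξ)) := by
  obtain ⟨M, hM⟩ := hbdd
  obtain ⟨V, hV⟩ := ContinuousLinearMap.exists_tendsto_of_dense_of_norm_le hM hdense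
    fun ξ hξ ↦ (hconv ξ hξ).1
  obtain ⟨W, hW⟩ := ContinuousLinearMap.exists_tendsto_of_dense_of_norm_le
    (g := fun l ↦ ContinuousLinearMap.adjoint (U l)) (fun l ↦ by simpa using hM l) hdense
    fun ξ hξ ↦ (hconv ξ hξ).2
  have hVW : ContinuousLinearMap.adjoint V = W := ContinuousLinearMap.adjoint_eq_of_tendsto hV hW
  refine ⟨V, ?_, fun ξ ↦ ⟨hV ξ, hVW ▸ hW ξ⟩⟩
  exact ContinuousLinearMap.mem_centralizer_of_tendsto
    (fun l ↦ Set.subset_centralizer_centralizer (hmem l)) hV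
end

section
/- The coproduct Δ of the quantum double D(G) is a homomorphism of unital ℂ-algebras from D(G) to D(G) ⊗_ℂ D(G) (with componentwise multiplication and unit η ⊗ η on the tensor product), Δ is coassociative, i.e. (Δ ⊗ id) ∘ Δ = (id ⊗ Δ) ∘ Δ, and the counit ε is a unital ℂ-algebra homomorphism D(G) → ℂ satisfying (ε ⊗ id) ∘ Δ = id = (id ⊗ ε) ∘ Δ; thus (D(G), Δ, ε) is a ℂ-bialgebra. -/
/-
The quantum double `D(G)` of a finite group `G` is modeled as the function space
`(G × G) → ℂ` (the complex vector space freely spanned by `G × G`, the basis element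
`(g,h)` being the indicator function of `{(g,h)}`).  Likewise the tensor products
`D(G) ⊗ D(G)` and `D(G) ⊗ D(G) ⊗ D(G)` are modeled as `((G×G) × (G×G)) → ℂ` and
`((G×G) × (G×G) × (G×G)) → ℂ`, via `δ_p ⊗ δ_q ↦ δ_{(p,q)}`.

* `qmul` : multiplication of `D(G)`, `(g₁,h₁)·(g₂,h₂) = δ_{g₁,h₁g₂h₁⁻¹}(g₁,h₁h₂)`.
* `eta` : the unit `η = Σ_k (k,1)`; `eta2 = η ⊗ η`.
* `qmul2` : the componentwise multiplication on `D(G) ⊗ D(G)`.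
* `Delta` : the coproduct, `Δ(g,h) = Σ_k (k,h) ⊗ (k⁻¹g,h)`; in closed form
  `(Δx)((g₁,h₁),(g₂,h₂)) = δ_{h₁,h₂} x(g₁g₂,h₁)`.
* `eps` : the counit, `ε(g,h) = δ_{g,1}`, i.e. `ε(x) = Σ_h x(1,h)`.
* `DeltaOne = Δ ⊗ id`, `DeltaTwo = id ⊗ Δ` from `D(G)⊗D(G)` to the triple tensor product.
* `epsL = ε ⊗ id`, `epsR = id ⊗ ε` from `D(G)⊗D(G)` to `D(G)`.
-/

namespace QuantumDoubleStmt4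

variable {G : Type} [Group G] [Fintype G] [DecidableEq G]

noncomputable def qmul (x y : (G × G) → ℂ) : (G × G) → ℂ :=
  fun p => ∑ k : G, x (p.1, k) * y (k⁻¹ * p.1 * k, k⁻¹ * p.2)

noncomputable def eta : (G × G) → ℂ := fun p => if p.2 = 1 then 1 else 0

noncomputable def qmul2 (x y : ((G × G) × (G × G)) → ℂ) : ((G × G) × (G × G)) → ℂ :=
  fun p => ∑ k₁ : G, ∑ k₂ : G,
    x ((p.1.1, k₁), (p.2.1, k₂)) *
      y ((k₁⁻¹ * p.1.1 * k₁, k₁⁻¹ * p.1.2), (k₂⁻¹ * p.2.1 * k₂, k₂⁻¹ * p.2.2))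

noncomputable def eta2 : ((G × G) × (G × G)) → ℂ :=
  fun p => if p.1.2 = 1 ∧ p.2.2 = 1 then 1 else 0

noncomputable def Delta (x : (G × G) → ℂ) : ((G × G) × (G × G)) → ℂ :=
  fun p => if p.1.2 = p.2.2 then x (p.1.1 * p.2.1, p.1.2) else 0

noncomputable def eps (x : (G × G) → ℂ) : ℂ := ∑ h : G, x (1, h)

/-- `Δ ⊗ id` on the (function model of the) tensor product. -/
noncomputable def DeltaOne (x : ((G × G) × (G × G)) → ℂ) :
    ((G × G) × (G × G) × (G × G)) → ℂ :=
  fun t => if t.1.2 = t.2.1.2 then x ((t.1.1 * t.2.1.1, t.1.2), t.2.2) else 0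

/-- `id ⊗ Δ` on the (function model of the) tensor product. -/
noncomputable def DeltaTwo (x : ((G × G) × (G × G)) → ℂ) :
    ((G × G) × (G × G) × (G × G)) → ℂ :=
  fun t => if t.2.1.2 = t.2.2.2 then x (t.1, (t.2.1.1 * t.2.2.1, t.2.1.2)) else 0

/-- `ε ⊗ id`. -/
noncomputable def epsL (x : ((G × G) × (G × G)) → ℂ) : (G × G) → ℂ :=
  fun q => ∑ h : G, x ((1, h), q)

/-- `id ⊗ ε`. -/
noncomputable def epsR (x : ((G × G) × (G × G)) → ℂ) : (G × G) → ℂ :=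
  fun p => ∑ h : G, x (p, (1, h))

/-! The coproduct is diagonal in the `h`-coordinate and multiplies the `g`-coordinates, so every
identity reduces to an identity in `G`: multiplicativity of `Δ` because conjugation
`g ↦ k⁻¹ g k` is a group homomorphism, coassociativity because multiplication in `G` is
associative, and multiplicativity of `ε` because `h ↦ k⁻¹ h` is a bijection of `G`. -/

/-- The iterated coproduct `Δ⁽²⁾(g,h) = Σ_{g₁g₂g₃ = g} (g₁,h) ⊗ (g₂,h) ⊗ (g₃,h)`. -/
noncomputable def Delta3 (x : (G × G) → ℂ) : ((G × G) × (G × G) × (G × G)) → ℂ :=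
  fun t => if t.1.2 = t.2.1.2 ∧ t.2.1.2 = t.2.2.2 then x (t.1.1 * t.2.1.1 * t.2.2.1, t.1.2) else 0

omit [Fintype G] in
theorem Delta_add (x y : (G × G) → ℂ) : Delta (x + y) = Delta x + Delta y := by
  funext p
  by_cases h : p.1.2 = p.2.2 <;> simp [Delta, h]

omit [Fintype G] in
theorem Delta_smul (c : ℂ) (x : (G × G) → ℂ) : Delta (c • x) = c • Delta x := by
  funext p
  by_cases h : p.1.2 = p.2.2 <;> simp [Delta, h]

theorem qmul2_Delta_Delta (x y : (G × G) → ℂ) (g₁ h₁ g₂ h₂ : G) :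
    qmul2 (Delta x) (Delta y) ((g₁, h₁), (g₂, h₂)) =
      if h₁ = h₂ then ∑ k : G, x (g₁ * g₂, k) * y (k⁻¹ * (g₁ * g₂) * k, k⁻¹ * h₁) else 0 := by
  have conj_mul (k : G) : k⁻¹ * g₁ * k * (k⁻¹ * g₂ * k) = k⁻¹ * (g₁ * g₂) * k := by group
  simp only [qmul2, Delta, ite_mul, zero_mul, Finset.sum_ite_eq, Finset.mem_univ, if_true,
    mul_right_inj, conj_mul]
  split_ifs <;> simp

theorem Delta_qmul (x y : (G × G) → ℂ) : Delta (qmul x y) = qmul2 (Delta x) (Delta y) := by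
  funext ⟨⟨g₁, h₁⟩, ⟨g₂, h₂⟩⟩
  rw [qmul2_Delta_Delta]
  rfl

omit [Fintype G] in
theorem Delta_eta : Delta (eta : (G × G) → ℂ) = eta2 := by
  funext ⟨⟨g₁, h₁⟩, ⟨g₂, h₂⟩⟩
  simp only [Delta, eta, eta2]
  split_ifs <;> simp_all

omit [Fintype G] in
theorem DeltaOne_Delta (x : (G × G) → ℂ) : DeltaOne (Delta x) = Delta3 x := by
  funext ⟨⟨g₁, h₁⟩, ⟨g₂, h₂⟩, ⟨g₃, h₃⟩⟩
  simp only [DeltaOne, Delta, Delta3]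
  split_ifs <;> simp_all

omit [Fintype G] in
theorem DeltaTwo_Delta (x : (G × G) → ℂ) : DeltaTwo (Delta x) = Delta3 x := by
  funext ⟨⟨g₁, h₁⟩, ⟨g₂, h₂⟩, ⟨g₃, h₃⟩⟩
  simp only [DeltaTwo, Delta, Delta3, mul_assoc]
  split_ifs <;> simp_all

omit [DecidableEq G] in
theorem eps_add (x y : (G × G) → ℂ) : eps (x + y) = eps x + eps y := by
  simp [eps, Finset.sum_add_distrib]

omit [DecidableEq G] in
theorem eps_smul (c : ℂ) (x : (G × G) → ℂ) : eps (c • x) = c * eps x := by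
  simp [eps, Finset.mul_sum]

omit [DecidableEq G] in
theorem eps_qmul (x y : (G × G) → ℂ) : eps (qmul x y) = eps x * eps y := by
  have sum_translate (k : G) : ∑ h : G, y (1, k⁻¹ * h) = eps y :=
    Equiv.sum_comp (Equiv.mulLeft k⁻¹) fun h => y (1, h)
  simp only [eps, qmul, mul_one, inv_mul_cancel]
  rw [Finset.sum_comm, Finset.sum_mul]
  simp only [← Finset.mul_sum, sum_translate, eps]

theorem eps_eta : eps (eta : (G × G) → ℂ) = 1 := by
  simp [eps, eta]

theorem epsL_Delta (x : (G × G) → ℂ) : epsL (Delta x) = x := by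
  funext q
  simp [epsL, Delta]

theorem epsR_Delta (x : (G × G) → ℂ) : epsR (Delta x) = x := by
  funext p
  simp [epsR, Delta]

/-- The coproduct `Δ` of the quantum double `D(G)` is a homomorphism of unital ℂ-algebras
from `D(G)` to `D(G) ⊗ D(G)` (with componentwise multiplication and unit `η ⊗ η`),
`Δ` is coassociative, and the counit `ε` is a unital ℂ-algebra homomorphism
`D(G) → ℂ` satisfying `(ε ⊗ id) ∘ Δ = id = (id ⊗ ε) ∘ Δ`; thus `(D(G), Δ, ε)` is a
ℂ-bialgebra. -/
theorem quantum_double_bialgebra :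
    -- Δ is ℂ-linear
    (∀ x y : (G × G) → ℂ, Delta (x + y) = Delta x + Delta y) ∧
    (∀ (c : ℂ) (x : (G × G) → ℂ), Delta (c • x) = c • Delta x) ∧
    -- Δ is multiplicative and unital
    (∀ x y : (G × G) → ℂ, Delta (qmul x y) = qmul2 (Delta x) (Delta y)) ∧
    (Delta (eta : (G × G) → ℂ) = eta2) ∧
    -- coassociativity
    (∀ x : (G × G) → ℂ, DeltaOne (Delta x) = DeltaTwo (Delta x)) ∧
    -- ε is a ℂ-linear, multiplicative, unital map to ℂ
    (∀ x y : (G × G) → ℂ, eps (x + y) = eps x + eps y) ∧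
    (∀ (c : ℂ) (x : (G × G) → ℂ), eps (c • x) = c * eps x) ∧
    (∀ x y : (G × G) → ℂ, eps (qmul x y) = eps x * eps y) ∧
    (eps (eta : (G × G) → ℂ) = 1) ∧
    -- counit laws
    (∀ x : (G × G) → ℂ, epsL (Delta x) = x ∧ epsR (Delta x) = x) :=
  ⟨Delta_add, Delta_smul, Delta_qmul, Delta_eta,
    fun x => (DeltaOne_Delta x).trans (DeltaTwo_Delta x).symm,
    eps_add, eps_smul, eps_qmul, eps_eta, fun x => ⟨epsL_Delta x, epsR_Delta x⟩⟩

end QuantumDoubleStmt4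
end

section
/- The R-matrix of the quantum double D(G) satisfies the quantum Yang–Baxter equation in D(G)^{⊗3}: R₁₂·R₁₃·R₂₃ = R₂₃·R₁₃·R₁₂, where R₁₂ = R ⊗ η, R₂₃ = η ⊗ R, and R₁₃ = Σ_{g,k∈G} (k,g) ⊗ η ⊗ (g,1). -/
/-
The quantum double `D(G)` of a finite group `G` is modeled as the function space
`(G × G) → ℂ`; the triple tensor product `D(G)⊗D(G)⊗D(G)` is modeled as
`((G×G) × (G×G) × (G×G)) → ℂ` (via `δ_p ⊗ δ_q ⊗ δ_r ↦ δ_{(p,q,r)}`).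

* `qmul3` : componentwise multiplication on the threefold tensor product, induced by
  the multiplication `(g₁,h₁)·(g₂,h₂) = δ_{g₁,h₁g₂h₁⁻¹}(g₁,h₁h₂)` of `D(G)`.
* `eta` : the unit `η = Σ_k (k,1)`.
* `Rmat` : the R-matrix `R = Σ_{g,k} (k,g) ⊗ (g,1)`, i.e. `R((a,b),(c,d)) = δ_{d,1}δ_{c,b}`.
* `R12 = R ⊗ η`, `R23 = η ⊗ R`, `R13 = Σ_{g,k} (k,g) ⊗ η ⊗ (g,1)`.
-/

namespace QuantumDoubleStmt8

variable {G : Type} [Group G] [Fintype G] [DecidableEq G]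

noncomputable def eta : (G × G) → ℂ := fun p => if p.2 = 1 then 1 else 0

noncomputable def qmul3 (x y : ((G × G) × (G × G) × (G × G)) → ℂ) :
    ((G × G) × (G × G) × (G × G)) → ℂ :=
  fun t => ∑ k₁ : G, ∑ k₂ : G, ∑ k₃ : G,
    x ((t.1.1, k₁), (t.2.1.1, k₂), (t.2.2.1, k₃)) *
      y ((k₁⁻¹ * t.1.1 * k₁, k₁⁻¹ * t.1.2),
         (k₂⁻¹ * t.2.1.1 * k₂, k₂⁻¹ * t.2.1.2),
         (k₃⁻¹ * t.2.2.1 * k₃, k₃⁻¹ * t.2.2.2))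

noncomputable def Rmat : ((G × G) × (G × G)) → ℂ :=
  fun p => if p.2.2 = 1 ∧ p.2.1 = p.1.2 then 1 else 0

noncomputable def R12 : ((G × G) × (G × G) × (G × G)) → ℂ :=
  fun t => Rmat (t.1, t.2.1) * eta t.2.2

noncomputable def R23 : ((G × G) × (G × G) × (G × G)) → ℂ :=
  fun t => eta t.1 * Rmat (t.2.1, t.2.2)

noncomputable def R13 : ((G × G) × (G × G) × (G × G)) → ℂ :=
  fun t => Rmat (t.1, t.2.2) * eta t.2.1

/-
Each of `R₁₂`, `R₂₃` and the partial products `R₁₂R₁₃`, `R₂₃R₁₃` is a sum of basis tensors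
`(g₁, k₁) ⊗ (g₂, k₂) ⊗ (g₃, k₃)` in which `k` is a function of `g`, so multiplying it on the
right by anything collapses the three sums of `qmul3` to one term. Evaluating both sides in
this way shows that each equals `Σ_{a,c,e} (a, ce) ⊗ (c, e) ⊗ (e, 1)`.
-/

section

variable {G : Type} [Group G] [Fintype G]

lemma qmul3_apply_of_support (x y : ((G × G) × (G × G) × (G × G)) → ℂ)
    (a b c d e f κ₁ κ₂ κ₃ : G)
    (hx : ∀ k₁ k₂ k₃, x ((a, k₁), (c, k₂), (e, k₃)) ≠ 0 → k₁ = κ₁ ∧ k₂ = κ₂ ∧ k₃ = κ₃) :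
    qmul3 x y ((a, b), (c, d), (e, f)) =
      x ((a, κ₁), (c, κ₂), (e, κ₃)) *
        y ((κ₁⁻¹ * a * κ₁, κ₁⁻¹ * b), (κ₂⁻¹ * c * κ₂, κ₂⁻¹ * d), (κ₃⁻¹ * e * κ₃, κ₃⁻¹ * f)) := by
  have hx' : ∀ k₁ k₂ k₃, ¬(k₁ = κ₁ ∧ k₂ = κ₂ ∧ k₃ = κ₃) → x ((a, k₁), (c, k₂), (e, k₃)) = 0 :=
    fun k₁ k₂ k₃ hk => by_contra fun h => hk (hx k₁ k₂ k₃ h)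
  simp only [qmul3]
  rw [Fintype.sum_eq_single κ₁, Fintype.sum_eq_single κ₂, Fintype.sum_eq_single κ₃]
  · intro k₃ hk₃
    simp [hx' κ₁ κ₂ k₃ (by simp [hk₃])]
  · intro k₂ hk₂
    exact Finset.sum_eq_zero fun k₃ _ => by simp [hx' κ₁ k₂ k₃ (by simp [hk₂])]
  · intro k₁ hk₁
    exact Finset.sum_eq_zero fun k₂ _ => Finset.sum_eq_zero fun k₃ _ => by
      simp [hx' k₁ k₂ k₃ (by simp [hk₁])]

end

variable {G : Type} [Group G] [Fintype G] [DecidableEq G]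

lemma qmul3_R12_R13_apply (a b c d e f : G) :
    qmul3 R12 R13 ((a, b), (c, d), (e, f)) =
      if b = c * e ∧ d = 1 ∧ f = 1 then 1 else 0 := by
  rw [qmul3_apply_of_support _ _ a b c d e f c 1 1 (by simp [R12, Rmat, eta])]
  simp [R12, R13, Rmat, eta, eq_inv_mul_iff_mul_eq, ← ite_and, and_comm, and_left_comm,
    eq_comm]

lemma qmul3_R23_R13_apply (a b c d e f : G) :
    qmul3 R23 R13 ((a, b), (c, d), (e, f)) =
      if b = e ∧ d = e ∧ f = 1 then 1 else 0 := by
  rw [qmul3_apply_of_support _ _ a b c d e f 1 e 1 (by simp [R23, Rmat, eta])]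
  simp [R23, R13, Rmat, eta, inv_mul_eq_one, ← ite_and, and_comm, and_left_comm, eq_comm]

lemma qmul3_qmul3_R12_R13_R23_apply (a b c d e f : G) :
    qmul3 (qmul3 R12 R13) R23 ((a, b), (c, d), (e, f)) =
      if b = c * e ∧ d = e ∧ f = 1 then 1 else 0 := by
  rw [qmul3_apply_of_support _ _ a b c d e f (c * e) 1 1 (by simp [qmul3_R12_R13_apply])]
  simp [qmul3_R12_R13_apply, R23, Rmat, eta, mul_assoc, inv_mul_eq_one, eq_inv_mul_iff_mul_eq,
    ← ite_and, and_comm, and_left_comm, eq_comm]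

lemma qmul3_qmul3_R23_R13_R12_apply (a b c d e f : G) :
    qmul3 (qmul3 R23 R13) R12 ((a, b), (c, d), (e, f)) =
      if b = c * e ∧ d = e ∧ f = 1 then 1 else 0 := by
  rw [qmul3_apply_of_support _ _ a b c d e f e e 1 (by simp [qmul3_R23_R13_apply])]
  simp [qmul3_R23_R13_apply, R12, Rmat, eta, mul_assoc, inv_mul_eq_one, ← ite_and, and_assoc,
    and_comm, and_left_comm, eq_comm]

/-- The R-matrix of the quantum double `D(G)` satisfies the quantum Yang–Baxter equation
in `D(G)^{⊗3}`: `R₁₂·R₁₃·R₂₃ = R₂₃·R₁₃·R₁₂`. -/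
theorem quantum_double_yang_baxter :
    qmul3 (qmul3 (R12 (G := G)) R13) R23 = qmul3 (qmul3 R23 R13) R12 := by
  funext ⟨⟨a, b⟩, ⟨c, d⟩, ⟨e, f⟩⟩
  rw [qmul3_qmul3_R12_R13_R23_apply, qmul3_qmul3_R23_R13_R12_apply]

end QuantumDoubleStmt8
end

section
/- Let A be a unital complex *-algebra, let {F^{a,b}}_{a,b∈G} be a ribbon multiplet family over A, and let D be an n-dimensional unitary representation of the quantum double D(G). Then the ribbon multiplet 𝐅^D = Σ_{a,b∈G} F^{a,b} ⊗ D(a,b) is a unitary element of M_n(A): 𝐅^D·(𝐅^D)* = (𝐅^D)*·𝐅^D = 1. -/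
/-
`G` is a finite group.  Representations of the quantum double `D(G)` are described by
their values on the basis elements `(g,h)`: a unitary representation of `D(G)` on `ℂ^I`
is a function `D : G × G → Matrix I I ℂ` such that the bilinear extension is a unital
ℂ-algebra homomorphism (`rel_mul`, `rel_one`) which is star-preserving (`rel_star`;
recall `(g,h)* = (h⁻¹gh, h⁻¹)` in `D(G)`, and `star` on matrices is conjugate-transpose).

A ribbon multiplet family over a unital complex *-algebra `A` is a family
`F : G → G → A` satisfying the algebraic relations of ribbon operators on a finite
ribbon in Kitaev's quantum double model.

`bF F D = Σ_{a,b} F a b ⊗ D(a,b)` is the associated ribbon multiplet, an `A`-valued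
matrix with entries `(bF F D) u v = Σ_{a,b} D(a,b) u v • F a b`.
-/

namespace QuantumDoubleStmt11

/-- A unitary representation of the quantum double `D(G)`, described on basis elements. -/
structure URep (G : Type) [Group G] [Fintype G] [DecidableEq G]
    (I : Type) [Fintype I] [DecidableEq I] where
  D : G × G → Matrix I I ℂ
  rel_mul : ∀ p q : G × G,
    D p * D q = if p.1 = p.2 * q.1 * p.2⁻¹ then D (p.1, p.2 * q.2) else 0
  rel_one : ∑ k : G, D (k, (1 : G)) = 1
  rel_star : ∀ g h : G, D (h⁻¹ * g * h, h⁻¹) = star (D (g, h))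

/-- A ribbon multiplet family over a unital complex *-algebra `A`. -/
structure RibbonFamily (G : Type) [Group G] [Fintype G] [DecidableEq G]
    (A : Type) [Ring A] [Algebra ℂ A] [StarRing A] [StarModule ℂ A] where
  F : G → G → A
  rel_mul : ∀ a₁ b₁ a₂ b₂ : G,
    F a₁ b₁ * F a₂ b₂ = if b₁ = b₂ then F (a₁ * a₂) b₁ else 0
  rel_star : ∀ a b : G, star (F a b) = F a⁻¹ b
  rel_sum_one : ∑ b : G, F (1 : G) b = 1

/-- The ribbon multiplet `𝐅^D = Σ_{a,b} F^{a,b} ⊗ D(a,b) ∈ M_I(A)`. -/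
noncomputable def bF {G : Type} [Group G] [Fintype G] [DecidableEq G]
    {A : Type} [Ring A] [Algebra ℂ A] {I : Type} [Fintype I]
    (F : G → G → A) (D : G × G → Matrix I I ℂ) : Matrix I I A :=
  Matrix.of fun u v => ∑ a : G, ∑ b : G, D (a, b) u v • F a b

/-!
Write `tmul x M` for the pure tensor `x ⊗ M` under `A ⊗ M_I(ℂ) ≅ M_I(A)`, so that
`𝐅^D = Σ_{a,b} tmul (F^{a,b}) (D(a,b))` and products multiply factorwise. In `𝐅 𝐅*` the ribbon
relation `F^{a,b} (F^{c,d})* = δ_{b,d} F^{ac⁻¹,b}` kills the terms with `b ≠ d`, and on the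
remaining ones `D(a,b) D(c,b)* = D(a,b) D(b⁻¹cb, b⁻¹) = δ_{a,c} D(a,1)` kills those with `a ≠ c`.
What is left is `(Σ_b F^{1,b}) ⊗ (Σ_a D(a,1)) = 1 ⊗ 1`. In `𝐅* 𝐅` the surviving matrices are
`D(b⁻¹ab, 1)`, and `Σ_a D(b⁻¹ab, 1) = 1` after reindexing by conjugation.
-/

section Tensor

variable {A : Type*} [Ring A] [Algebra ℂ A] {I : Type*}

def tmul (x : A) (M : Matrix I I ℂ) : Matrix I I A :=
  M.map (· • x)

@[simp]
theorem tmul_apply (x : A) (M : Matrix I I ℂ) (u v : I) : tmul x M u v = M u v • x := rfl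

@[simp]
theorem tmul_zero_left (M : Matrix I I ℂ) : tmul (0 : A) M = 0 := by
  ext; simp

@[simp]
theorem tmul_zero_right (x : A) : tmul x (0 : Matrix I I ℂ) = 0 := by
  ext; simp

theorem tmul_ite_left (p : Prop) [Decidable p] (x : A) (M : Matrix I I ℂ) :
    tmul (if p then x else 0) M = if p then tmul x M else 0 := by
  split_ifs <;> simp

theorem tmul_ite_right (p : Prop) [Decidable p] (x : A) (M : Matrix I I ℂ) :
    tmul x (if p then M else 0) = if p then tmul x M else 0 := by
  split_ifs <;> simp

theorem tmul_sum_left {ι : Type*} (s : Finset ι) (x : ι → A) (M : Matrix I I ℂ) :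
    tmul (∑ i ∈ s, x i) M = ∑ i ∈ s, tmul (x i) M := by
  ext u v
  simp only [tmul_apply, Matrix.sum_apply, Finset.smul_sum]

theorem tmul_sum_right {κ : Type*} (t : Finset κ) (x : A) (M : κ → Matrix I I ℂ) :
    tmul x (∑ k ∈ t, M k) = ∑ k ∈ t, tmul x (M k) := by
  ext u v
  simp only [tmul_apply, Matrix.sum_apply, Finset.sum_smul]

theorem tmul_mul_tmul [Fintype I] (x y : A) (M N : Matrix I I ℂ) :
    tmul x M * tmul y N = tmul (x * y) (M * N) := by
  ext u v
  simp only [Matrix.mul_apply, tmul_apply, smul_mul_smul_comm, Finset.sum_smul]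

@[simp]
theorem tmul_one_one [DecidableEq I] : tmul (1 : A) (1 : Matrix I I ℂ) = 1 := by
  ext u v
  simp [Matrix.one_apply, ite_smul]

theorem star_tmul [StarRing A] [StarModule ℂ A] (x : A) (M : Matrix I I ℂ) :
    star (tmul x M) = tmul (star x) (star M) := by
  ext u v
  simp

end Tensor

section Multiplet

variable {G : Type} [Group G] [Fintype G] [DecidableEq G] {A : Type} [Ring A] [Algebra ℂ A]
  {I : Type} [Fintype I]

theorem bF_eq_sum_tmul (F : G → G → A) (D : G × G → Matrix I I ℂ) :
    bF F D = ∑ a, ∑ b, tmul (F a b) (D (a, b)) := by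
  ext u v
  simp [bF, Matrix.sum_apply]

theorem bF_mul_bF (F F' : G → G → A) (D D' : G × G → Matrix I I ℂ) :
    bF F D * bF F' D' =
      ∑ a, ∑ b, ∑ c, ∑ d, tmul (F a b * F' c d) (D (a, b) * D' (c, d)) := by
  simp only [bF_eq_sum_tmul, Finset.sum_mul_sum, tmul_mul_tmul]
  exact Finset.sum_congr rfl fun _ _ => Finset.sum_comm

theorem star_bF [StarRing A] [StarModule ℂ A] (F : G → G → A) (D : G × G → Matrix I I ℂ) :
    star (bF F D) = bF (fun a b => star (F a b)) (fun p => star (D p)) := by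
  simp only [bF_eq_sum_tmul, star_sum, star_tmul]

end Multiplet

namespace URep

variable {G : Type} [Group G] [Fintype G] [DecidableEq G] {I : Type} [Fintype I] [DecidableEq I]
  (ρ : URep G I)

theorem mul_star_of_snd_eq (a b c : G) :
    ρ.D (a, b) * star (ρ.D (c, b)) = if a = c then ρ.D (a, 1) else 0 := by
  have conj_conj : b * (b⁻¹ * c * b) * b⁻¹ = c := by group
  rw [← ρ.rel_star, ρ.rel_mul, conj_conj, mul_inv_cancel]

theorem star_mul_of_snd_eq (a b c : G) :
    star (ρ.D (a, b)) * ρ.D (c, b) = if a = c then ρ.D (b⁻¹ * a * b, 1) else 0 := by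
  rw [← ρ.rel_star, ρ.rel_mul]
  simp only [inv_mul_cancel, inv_inv, mul_left_inj, mul_right_inj]

theorem sum_conj_one (b : G) : ∑ a, ρ.D (b⁻¹ * a * b, 1) = 1 := by
  rw [← ρ.rel_one]
  exact Fintype.sum_equiv (MulAut.conj b⁻¹).toEquiv _ _ (fun a => by simp)

end URep

namespace RibbonFamily

variable {G : Type} [Group G] [Fintype G] [DecidableEq G]
  {A : Type} [Ring A] [Algebra ℂ A] [StarRing A] [StarModule ℂ A] (R : RibbonFamily G A)

theorem mul_star (a b c d : G) :
    R.F a b * star (R.F c d) = if b = d then R.F (a * c⁻¹) b else 0 := by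
  rw [R.rel_star, R.rel_mul]

theorem star_mul (a b c d : G) :
    star (R.F a b) * R.F c d = if b = d then R.F (a⁻¹ * c) b else 0 := by
  rw [R.rel_star, R.rel_mul]

end RibbonFamily

section Unitarity

variable {G : Type} [Group G] [Fintype G] [DecidableEq G]
  {A : Type} [Ring A] [Algebra ℂ A] [StarRing A] [StarModule ℂ A]
  {I : Type} [Fintype I] [DecidableEq I] (R : RibbonFamily G A) (ρ : URep G I)

theorem bF_mul_star_bF : bF R.F ρ.D * star (bF R.F ρ.D) = 1 := calc
  _ = ∑ a, ∑ b, ∑ c, ∑ d, tmul (R.F a b * star (R.F c d)) (ρ.D (a, b) * star (ρ.D (c, d))) := by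
    rw [star_bF, bF_mul_bF]
  _ = ∑ a, ∑ b, ∑ c, tmul (R.F (a * c⁻¹) b) (ρ.D (a, b) * star (ρ.D (c, b))) := by
    simp only [R.mul_star, tmul_ite_left, Finset.sum_ite_eq, Finset.mem_univ, if_true]
  _ = ∑ b, tmul (R.F 1 b) (∑ a, ρ.D (a, 1)) := by
    rw [Finset.sum_comm]
    simp only [ρ.mul_star_of_snd_eq, tmul_ite_right, Finset.sum_ite_eq, Finset.mem_univ, if_true,
      mul_inv_cancel, tmul_sum_right]
  _ = 1 := by rw [ρ.rel_one, ← tmul_sum_left, R.rel_sum_one, tmul_one_one]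

theorem star_bF_mul_bF : star (bF R.F ρ.D) * bF R.F ρ.D = 1 := calc
  _ = ∑ a, ∑ b, ∑ c, ∑ d, tmul (star (R.F a b) * R.F c d) (star (ρ.D (a, b)) * ρ.D (c, d)) := by
    rw [star_bF, bF_mul_bF]
  _ = ∑ a, ∑ b, ∑ c, tmul (R.F (a⁻¹ * c) b) (star (ρ.D (a, b)) * ρ.D (c, b)) := by
    simp only [R.star_mul, tmul_ite_left, Finset.sum_ite_eq, Finset.mem_univ, if_true]
  _ = ∑ b, tmul (R.F 1 b) (∑ a, ρ.D (b⁻¹ * a * b, 1)) := by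
    rw [Finset.sum_comm]
    simp only [ρ.star_mul_of_snd_eq, tmul_ite_right, Finset.sum_ite_eq, Finset.mem_univ, if_true,
      inv_mul_cancel, tmul_sum_right]
  _ = 1 := by simp only [ρ.sum_conj_one, ← tmul_sum_left, R.rel_sum_one, tmul_one_one]

end Unitarity

/-- Let `A` be a unital complex *-algebra, `{F^{a,b}}` a ribbon multiplet family over `A`,
and `D` an `n`-dimensional unitary representation of the quantum double `D(G)`.  Then
the ribbon multiplet `𝐅^D = Σ_{a,b} F^{a,b} ⊗ D(a,b)` is a unitary element of `M_n(A)`: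
`𝐅^D·(𝐅^D)* = (𝐅^D)*·𝐅^D = 1`. -/
theorem ribbon_multiplet_unitary
    (G : Type) [Group G] [Fintype G] [DecidableEq G]
    (A : Type) [Ring A] [Algebra ℂ A] [StarRing A] [StarModule ℂ A]
    (R : RibbonFamily G A) (n : ℕ) (D : URep G (Fin n)) :
    bF R.F D.D * star (bF R.F D.D) = 1 ∧
    star (bF R.F D.D) * bF R.F D.D = 1 :=
  ⟨bF_mul_star_bF R D, star_bF_mul_bF R D⟩

end QuantumDoubleStmt11
end

section
/- Let A be a unital complex *-algebra, {F^{a,b}}_{a,b∈G} a ribbon multiplet family over A, and for each n-dimensional unitary representation D of the quantum double D(G) define μ^D: A → M_n(A) by μ^D(O) := 𝐅^D·(O ⊗ 1_n)·(𝐅^D)*. Then each μ^D is a unital *-homomorphism, and for unitary representations D₁, D₂ of dimensions n₁, n₂ one has μ^{D₁} ⊕ μ^{D₂} = μ^{D₁⊕D₂} and μ^{D₁} × μ^{D₂} = μ^{D₁×D₂}, where (μ^{D₁} × μ^{D₂})^{(u₁u₂),(v₁v₂)}(O) := μ^{D₁,u₁v₁}( μ^{D₂,u₂v₂}(O) ) and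 D₁×D₂ := (D₁ ⊗ D₂) ∘ Δ. -/
/-
Setup as in Statements 11–12: unitary representations of the quantum double `D(G)` are
described by their values `D : G × G → Matrix I I ℂ` on the basis elements `(g,h)`; a
ribbon multiplet family over a unital complex *-algebra `A` is a family `F : G → G → A`
satisfying the ribbon operator relations; `bF F D = Σ_{a,b} F^{a,b} ⊗ D(a,b)` is the
associated ribbon multiplet.

`mu F D O = 𝐅^D · (O ⊗ 1_n) · (𝐅^D)*` is the associated amplimorphism `A → M_n(A)`.
The direct sum of amplimorphisms is realized block-diagonally on `Fin n₁ ⊕ Fin n₂`, and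
their product `(μ₁ × μ₂)^{(u₁u₂),(v₁v₂)}(O) = μ₁^{u₁v₁}(μ₂^{u₂v₂}(O))` on
`Fin n₁ × Fin n₂`; `D₁ × D₂ = (D₁ ⊗ D₂) ∘ Δ` is the monoidal product of
representations, on basis elements `(D₁ × D₂)(g,h) = Σ_k D₁(k,h) ⊗ D₂(k⁻¹g,h)`.
-/

namespace QuantumDoubleStmt13

structure URep (G : Type) [Group G] [Fintype G] [DecidableEq G]
    (I : Type) [Fintype I] [DecidableEq I] where
  D : G × G → Matrix I I ℂ
  rel_mul : ∀ p q : G × G,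
    D p * D q = if p.1 = p.2 * q.1 * p.2⁻¹ then D (p.1, p.2 * q.2) else 0
  rel_one : ∑ k : G, D (k, (1 : G)) = 1
  rel_star : ∀ g h : G, D (h⁻¹ * g * h, h⁻¹) = star (D (g, h))

structure RibbonFamily (G : Type) [Group G] [Fintype G] [DecidableEq G]
    (A : Type) [Ring A] [Algebra ℂ A] [StarRing A] [StarModule ℂ A] where
  F : G → G → A
  rel_mul : ∀ a₁ b₁ a₂ b₂ : G,
    F a₁ b₁ * F a₂ b₂ = if b₁ = b₂ then F (a₁ * a₂) b₁ else 0
  rel_star : ∀ a b : G, star (F a b) = F a⁻¹ b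
  rel_sum_one : ∑ b : G, F (1 : G) b = 1

noncomputable def bF {G : Type} [Group G] [Fintype G] [DecidableEq G]
    {A : Type} [Ring A] [Algebra ℂ A] {I : Type} [Fintype I]
    (F : G → G → A) (D : G × G → Matrix I I ℂ) : Matrix I I A :=
  Matrix.of fun u v => ∑ a : G, ∑ b : G, D (a, b) u v • F a b

/-- The amplimorphism `μ^D(O) = 𝐅^D · (O ⊗ 1) · (𝐅^D)*`. -/
noncomputable def mu {G : Type} [Group G] [Fintype G] [DecidableEq G]
    {A : Type} [Ring A] [Algebra ℂ A] [StarRing A] [StarModule ℂ A]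
    {I : Type} [Fintype I] [DecidableEq I]
    (F : G → G → A) (D : G × G → Matrix I I ℂ) (O : A) : Matrix I I A :=
  bF F D * Matrix.diagonal (fun _ => O) * star (bF F D)

noncomputable def sumD {G I₁ I₂ : Type}
    (D₁ : G × G → Matrix I₁ I₁ ℂ) (D₂ : G × G → Matrix I₂ I₂ ℂ) :
    G × G → Matrix (I₁ ⊕ I₂) (I₁ ⊕ I₂) ℂ :=
  fun p => Matrix.fromBlocks (D₁ p) 0 0 (D₂ p)

noncomputable def tensorD {G : Type} [Group G] [Fintype G] {I₁ I₂ : Type}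
    (D₁ : G × G → Matrix I₁ I₁ ℂ) (D₂ : G × G → Matrix I₂ I₂ ℂ) :
    G × G → Matrix (I₁ × I₂) (I₁ × I₂) ℂ :=
  fun p => ∑ k : G, Matrix.kroneckerMap (· * ·) (D₁ (k, p.2)) (D₂ (k⁻¹ * p.1, p.2))
end QuantumDoubleStmt13

/-!
`𝐅^D = Σ_{a,b} F^{a,b} ⊗ D(a,b)` is unitary: in `𝐅^D (𝐅^D)*` the ribbon relations kill the
terms with `b ≠ b'` and the representation relations those with `a ≠ a'`, which leaves
`(Σ_b F^{1,b}) ⊗ (Σ_a D(a,1)) = 1 ⊗ 1`; the same happens for `(𝐅^D)* 𝐅^D` after conjugating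
`a` by `b`. So `μ^D` is the scalar embedding `A → M_n(A)` followed by conjugation with a
unitary, a unital *-homomorphism. The direct sum is block diagonal because `𝐅^{D₁⊕D₂}` is,
and the product formula holds because the entries of `𝐅^{D₁×D₂}` factor as
`𝐅^{D₁}_{u₁w₁} 𝐅^{D₂}_{u₂w₂}`, by `F^{k,b} F^{a,b'} = δ_{b,b'} F^{ka,b}`.
-/

namespace Matrix

variable {S A I : Type*} [CommSemiring S] [Semiring A] [Algebra S A]

theorem map_smul_mul_map_smul [Fintype I] (M N : Matrix I I S) (x y : A) :
    M.map (· • x) * N.map (· • y) = (M * N).map (· • (x * y)) := by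
  ext u v
  simp only [mul_apply, map_apply, smul_mul_smul_comm, Finset.sum_smul]

theorem star_map_smul [Star S] [Star A] [StarModule S A] (M : Matrix I I S) (x : A) :
    star (M.map (· • x)) = (star M).map (· • star x) := by
  ext u v
  simp only [star_apply, map_apply, star_smul]

theorem sum_map_smul {ι : Type*} (s : Finset ι) (M : ι → Matrix I I S) (x : A) :
    ∑ i ∈ s, (M i).map (· • x) = (∑ i ∈ s, M i).map (· • x) := by
  ext u v
  simp only [sum_apply, map_apply, Finset.sum_smul]

theorem sum_map_smul_right {ι : Type*} (s : Finset ι) (M : Matrix I I S) (x : ι → A) :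
    ∑ i ∈ s, M.map (· • x i) = M.map (· • ∑ i ∈ s, x i) := by
  ext u v
  simp only [sum_apply, map_apply, Finset.smul_sum]

theorem one_map_smul_one [DecidableEq I] : (1 : Matrix I I S).map (· • (1 : A)) = 1 :=
  Matrix.map_one _ (zero_smul S 1) (one_smul S 1)

def scalarStarAlgHom [StarRing A] (I : Type*) [Fintype I] [DecidableEq I] (S : Type*)
    [CommSemiring S] [Algebra S A] : A →⋆ₐ[S] Matrix I I A :=
  { scalarAlgHom I S with
    map_star' := fun a => (diagonal_conjTranspose fun _ : I => a).symm }

end Matrix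

namespace QuantumDoubleStmt13

section

variable {G : Type} [Group G] [Fintype G] [DecidableEq G] {A : Type} [Ring A] [Algebra ℂ A]

theorem bF_eq_sum {I : Type} [Fintype I] (F : G → G → A) (D : G × G → Matrix I I ℂ) :
    bF F D = ∑ p : G × G, (D p).map (· • F p.1 p.2) := by
  ext u v
  simp only [bF, Matrix.of_apply, Matrix.sum_apply, Matrix.map_apply, Fintype.sum_prod_type]

theorem bF_sumD {I₁ I₂ : Type} [Fintype I₁] [Fintype I₂] (F : G → G → A)
    (D₁ : G × G → Matrix I₁ I₁ ℂ) (D₂ : G × G → Matrix I₂ I₂ ℂ) :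
    bF F (sumD D₁ D₂) = Matrix.fromBlocks (bF F D₁) 0 0 (bF F D₂) := by
  ext (u | u) (v | v) <;> simp [bF, sumD]

variable [StarRing A] [StarModule ℂ A]

theorem RibbonFamily.mul_star (R : RibbonFamily G A) (a b a' b' : G) :
    R.F a b * star (R.F a' b') = if b = b' then R.F (a * a'⁻¹) b else 0 := by
  rw [R.rel_star, R.rel_mul]

theorem RibbonFamily.star_mul (R : RibbonFamily G A) (a b a' b' : G) :
    star (R.F a b) * R.F a' b' = if b = b' then R.F (a⁻¹ * a') b else 0 := by
  rw [R.rel_star, R.rel_mul]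

section Unitary

variable {I : Type} [Fintype I] [DecidableEq I]

namespace URep

theorem mul_star (D : URep G I) (a a' b : G) :
    D.D (a, b) * star (D.D (a', b)) = if a = a' then D.D (a, 1) else 0 := by
  rw [← D.rel_star, D.rel_mul]
  simp only [mul_assoc, mul_inv_cancel_left, mul_inv_cancel, mul_one]

theorem star_mul (D : URep G I) (a a' b : G) :
    star (D.D (a, b)) * D.D (a', b) = if a = a' then D.D (b⁻¹ * a * b, 1) else 0 := by
  rw [← D.rel_star, D.rel_mul]
  simp only [inv_inv, inv_mul_cancel, mul_left_inj, mul_right_inj]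

theorem sum_conj_one (D : URep G I) (b : G) : ∑ a : G, D.D (b⁻¹ * a * b, 1) = 1 := by
  rw [← D.rel_one]
  exact Fintype.sum_equiv (MulAut.conj b⁻¹).toEquiv _ _ fun a => by simp

end URep

theorem bF_mul_star_self (R : RibbonFamily G A) (D : URep G I) :
    bF R.F D.D * star (bF R.F D.D) = 1 := by
  have term : ∀ p q : G × G,
      (D.D p).map (· • R.F p.1 p.2) * (star (D.D q)).map (· • star (R.F q.1 q.2)) =
        if p = q then (D.D (p.1, 1)).map (· • R.F 1 p.2) else 0 := by
    rintro ⟨a, b⟩ ⟨a', b'⟩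
    rw [Matrix.map_smul_mul_map_smul, R.mul_star]
    rcases eq_or_ne b b' with rfl | hb
    · rw [D.mul_star]
      rcases eq_or_ne a a' with rfl | ha
      · simp
      · simp [ha]
    · simp only [hb, Prod.mk.injEq, and_false, if_false, smul_zero]
      rfl
  calc bF R.F D.D * star (bF R.F D.D)
      = ∑ p : G × G, (D.D (p.1, 1)).map (· • R.F 1 p.2) := by
        simp only [bF_eq_sum R.F, star_sum, Matrix.star_map_smul, Finset.sum_mul_sum, term,
          Finset.sum_ite_eq, Finset.mem_univ, if_true]
    _ = 1 := by
        rw [Fintype.sum_prod_type]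
        simp only [Matrix.sum_map_smul_right, Matrix.sum_map_smul, D.rel_one, R.rel_sum_one,
          Matrix.one_map_smul_one]

theorem star_mul_bF_self (R : RibbonFamily G A) (D : URep G I) :
    star (bF R.F D.D) * bF R.F D.D = 1 := by
  have term : ∀ p q : G × G,
      (star (D.D p)).map (· • star (R.F p.1 p.2)) * (D.D q).map (· • R.F q.1 q.2) =
        if p = q then (D.D (p.2⁻¹ * p.1 * p.2, 1)).map (· • R.F 1 p.2) else 0 := by
    rintro ⟨a, b⟩ ⟨a', b'⟩
    rw [Matrix.map_smul_mul_map_smul, R.star_mul]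
    rcases eq_or_ne b b' with rfl | hb
    · rw [D.star_mul]
      rcases eq_or_ne a a' with rfl | ha
      · simp
      · simp [ha]
    · simp only [hb, Prod.mk.injEq, and_false, if_false, smul_zero]
      rfl
  calc star (bF R.F D.D) * bF R.F D.D
      = ∑ p : G × G, (D.D (p.2⁻¹ * p.1 * p.2, 1)).map (· • R.F 1 p.2) := by
        simp only [bF_eq_sum R.F, star_sum, Matrix.star_map_smul, Finset.sum_mul_sum, term,
          Finset.sum_ite_eq, Finset.mem_univ, if_true]
    _ = 1 := by
        rw [Fintype.sum_prod_type_right]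
        simp only [Matrix.sum_map_smul, D.sum_conj_one, Matrix.sum_map_smul_right,
          R.rel_sum_one, Matrix.one_map_smul_one]

theorem bF_mem_unitary (R : RibbonFamily G A) (D : URep G I) :
    bF R.F D.D ∈ unitary (Matrix I I A) :=
  Unitary.mem_iff.mpr ⟨star_mul_bF_self R D, bF_mul_star_self R D⟩

noncomputable def amplimorphism (R : RibbonFamily G A) (D : URep G I) :
    A →⋆ₐ[ℂ] Matrix I I A :=
  (Unitary.conjStarAlgAut ℂ (Matrix I I A) ⟨_, bF_mem_unitary R D⟩).toStarAlgHom.comp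
    (Matrix.scalarStarAlgHom I ℂ)

theorem coe_amplimorphism (R : RibbonFamily G A) (D : URep G I) :
    ⇑(amplimorphism R D) = mu R.F D.D :=
  rfl

theorem mu_apply (F : G → G → A) (D : G × G → Matrix I I ℂ) (O : A) (u v : I) :
    mu F D O u v = ∑ w : I, bF F D u w * O * star (bF F D v w) := by
  rw [mu, Matrix.mul_apply]
  simp only [Matrix.mul_diagonal, Matrix.star_apply]

end Unitary

variable {I₁ I₂ : Type} [Fintype I₁] [Fintype I₂]

theorem mu_sumD [DecidableEq I₁] [DecidableEq I₂] (F : G → G → A)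
    (D₁ : G × G → Matrix I₁ I₁ ℂ) (D₂ : G × G → Matrix I₂ I₂ ℂ) (O : A) :
    mu F (sumD D₁ D₂) O = Matrix.fromBlocks (mu F D₁ O) 0 0 (mu F D₂ O) := by
  rw [mu, bF_sumD, ← Sum.elim_lam_const_lam_const, ← Matrix.fromBlocks_diagonal,
    Matrix.star_eq_conjTranspose, Matrix.fromBlocks_conjTranspose, Matrix.fromBlocks_multiply,
    Matrix.fromBlocks_multiply]
  simp [mu, Matrix.star_eq_conjTranspose]

theorem bF_tensorD_apply (R : RibbonFamily G A)
    (D₁ : G × G → Matrix I₁ I₁ ℂ) (D₂ : G × G → Matrix I₂ I₂ ℂ) (u w : I₁ × I₂) :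
    bF R.F (tensorD D₁ D₂) u w = bF R.F D₁ u.1 w.1 * bF R.F D₂ u.2 w.2 := by
  symm
  calc bF R.F D₁ u.1 w.1 * bF R.F D₂ u.2 w.2
      = ∑ k : G, ∑ a : G, ∑ b : G, ∑ b' : G,
          (D₁ (k, b) u.1 w.1 * D₂ (a, b') u.2 w.2) • (R.F k b * R.F a b') := by
        simp only [bF, Matrix.of_apply, Finset.sum_mul_sum, smul_mul_smul_comm]
    _ = ∑ k : G, ∑ a : G, ∑ b : G, (D₁ (k, b) u.1 w.1 * D₂ (a, b) u.2 w.2) • R.F (k * a) b := by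
        simp only [R.rel_mul, smul_ite, smul_zero, Finset.sum_ite_eq, Finset.mem_univ, if_true]
    _ = ∑ k : G, ∑ a : G, ∑ b : G,
          (D₁ (k, b) u.1 w.1 * D₂ (k⁻¹ * a, b) u.2 w.2) • R.F a b := by
        refine Finset.sum_congr rfl fun k _ => ?_
        exact Fintype.sum_equiv (Equiv.mulLeft k) _ _ fun a => by simp
    _ = ∑ a : G, ∑ b : G, ∑ k : G,
          (D₁ (k, b) u.1 w.1 * D₂ (k⁻¹ * a, b) u.2 w.2) • R.F a b := by
        rw [Finset.sum_comm]
        exact Finset.sum_congr rfl fun a _ => Finset.sum_comm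
    _ = bF R.F (tensorD D₁ D₂) u w := by
        simp only [bF, tensorD, Matrix.of_apply, Matrix.sum_apply, Matrix.kroneckerMap_apply,
          Finset.sum_smul]

theorem mu_tensorD_apply [DecidableEq I₁] [DecidableEq I₂] (R : RibbonFamily G A)
    (D₁ : G × G → Matrix I₁ I₁ ℂ) (D₂ : G × G → Matrix I₂ I₂ ℂ) (O : A) (u v : I₁ × I₂) :
    mu R.F (tensorD D₁ D₂) O u v = mu R.F D₁ (mu R.F D₂ O u.2 v.2) u.1 v.1 := by
  simp only [mu_apply, Fintype.sum_prod_type, bF_tensorD_apply, star_mul, Finset.mul_sum,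
    Finset.sum_mul, mul_assoc]

end

/-- Let `A` be a unital complex *-algebra, `{F^{a,b}}` a ribbon multiplet family over `A`,
and for each `n`-dimensional unitary representation `D` of `D(G)` define
`μ^D(O) = 𝐅^D·(O ⊗ 1_n)·(𝐅^D)*`.  Then each `μ^D` is a unital *-homomorphism, and for
unitary representations `D₁, D₂` of dimensions `n₁, n₂` one has
`μ^{D₁} ⊕ μ^{D₂} = μ^{D₁⊕D₂}` and `μ^{D₁} × μ^{D₂} = μ^{D₁×D₂}`. -/
theorem ribbon_amplimorphism
    (G : Type) [Group G] [Fintype G] [DecidableEq G]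
    (A : Type) [Ring A] [Algebra ℂ A] [StarRing A] [StarModule ℂ A]
    (R : RibbonFamily G A) (n n₁ n₂ : ℕ)
    (D : URep G (Fin n)) (D₁ : URep G (Fin n₁)) (D₂ : URep G (Fin n₂)) :
    -- μ^D is a unital *-homomorphism:
    (∀ O₁ O₂ : A, mu R.F D.D (O₁ * O₂) = mu R.F D.D O₁ * mu R.F D.D O₂) ∧
    (∀ O₁ O₂ : A, mu R.F D.D (O₁ + O₂) = mu R.F D.D O₁ + mu R.F D.D O₂) ∧
    (∀ (c : ℂ) (O : A), mu R.F D.D (c • O) = c • mu R.F D.D O) ∧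
    (mu R.F D.D (1 : A) = 1) ∧
    (∀ O : A, mu R.F D.D (star O) = star (mu R.F D.D O)) ∧
    -- direct sums and monoidal products:
    (∀ O : A, mu R.F (sumD D₁.D D₂.D) O =
      Matrix.fromBlocks (mu R.F D₁.D O) 0 0 (mu R.F D₂.D O)) ∧
    (∀ O : A, mu R.F (tensorD D₁.D D₂.D) O =
      Matrix.of fun (u v : Fin n₁ × Fin n₂) =>
        mu R.F D₁.D (mu R.F D₂.D O u.2 v.2) u.1 v.1) := by
  rw [← coe_amplimorphism R D]
  exact ⟨map_mul _, map_add _, map_smul _, map_one _, map_star _, mu_sumD R.F D₁.D D₂.D,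
    fun O => Matrix.ext (mu_tensorD_apply R D₁.D D₂.D O)⟩

end QuantumDoubleStmt13
end

section
/- Let M, N, P be left modules over the quantum double D(G), with tensor products of modules given the D(G)-module structure via the coproduct Δ, and for any two D(G)-modules X, Y let c_{X,Y}: X ⊗ Y → Y ⊗ X be the map c_{X,Y}(x ⊗ y) := Σ_{g,k∈G} ((g,1)·y) ⊗ ((k,g)·x). Then the braid relation holds: (c_{N,P} ⊗ id_M) ∘ (id_N ⊗ c_{M,P}) ∘ (c_{M,N} ⊗ id_P) = (id_P ⊗ c_{M,N}) ∘ (c_{M,P} ⊗ id_N) ∘ (id_M ⊗ c_{N,P}) as ℂ-linear maps M ⊗ N ⊗ P → P ⊗ N ⊗ M (with the standard associativity identifications of iterated tensor products). -/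
open scoped TensorProduct

/-
A `D(G)`-module is encoded by the action of the basis elements `(g,h)` of `D(G)`
(`DGAction`); the braid relation is an equality of ℂ-linear maps
`(M ⊗ N) ⊗ P → (P ⊗ N) ⊗ M`, with `TensorProduct.assoc` inserted between the steps.

Proof idea: `(g,1)` acts as the projection `π_g` onto the `g`-graded part and `Σ_k (k,g)`
as the action `ρ_g` of the group element `g`, so that `(k,g) = π_k ρ_g`,
`c(x ⊗ y) = Σ_g π_g y ⊗ ρ_g x` and `ρ_g π_a = π_{gag⁻¹} ρ_g`. Both sides of the braid
relation send `m ⊗ n ⊗ p` to `Σ_b π_b p ⊗ (ρ_b ⊗ ρ_b) (c (m ⊗ n))`: on the left since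
`c (x ⊗ π_b y) = π_b y ⊗ ρ_b x`, and on the right since moreover `c` commutes with the
diagonal action `ρ_b ⊗ ρ_b`, which is the conjugation invariance `ρ_b π_a = π_{bab⁻¹} ρ_b`.
-/

namespace QuantumDoubleStmt16

structure DGAction (G : Type) [Group G] [Fintype G] [DecidableEq G]
    (M : Type) [AddCommGroup M] [Module ℂ M] where
  act : G × G → M →ₗ[ℂ] M
  rel_mul : ∀ p q : G × G,
    act p ∘ₗ act q = if p.1 = p.2 * q.1 * p.2⁻¹ then act (p.1, p.2 * q.2) else 0
  rel_one : (∑ k : G, act (k, (1 : G))) = LinearMap.id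

variable {G : Type} [Group G] [Fintype G] [DecidableEq G]
variable {M N P : Type} [AddCommGroup M] [Module ℂ M] [AddCommGroup N] [Module ℂ N]
  [AddCommGroup P] [Module ℂ P]

/-- The braiding `c_{M,N}(m ⊗ n) = Σ_{g,k} ((g,1)·n) ⊗ ((k,g)·m)`. -/
noncomputable def braidMap (αM : DGAction G M) (αN : DGAction G N) :
    (M ⊗[ℂ] N) →ₗ[ℂ] (N ⊗[ℂ] M) :=
  ∑ g : G, ∑ k : G,
    (TensorProduct.comm ℂ M N).toLinearMap ∘ₗ
      TensorProduct.map (αM.act (k, g)) (αN.act (g, (1 : G)))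

namespace DGAction

variable (α : DGAction G M)

def proj (g : G) : M →ₗ[ℂ] M := α.act (g, 1)

noncomputable def groupAct (g : G) : M →ₗ[ℂ] M := ∑ k : G, α.act (k, g)

lemma act_act (p q : G × G) (m : M) :
    α.act p (α.act q m) = if p.1 = p.2 * q.1 * p.2⁻¹ then α.act (p.1, p.2 * q.2) m else 0 := by
  rw [← LinearMap.comp_apply, α.rel_mul]
  split <;> rfl

lemma proj_proj (a b : G) (m : M) :
    α.proj a (α.proj b m) = if a = b then α.proj a m else 0 := by
  simp [proj, act_act]

lemma groupAct_proj (g a : G) (m : M) :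
    α.groupAct g (α.proj a m) = α.proj (g * a * g⁻¹) (α.groupAct g m) := by
  simp [proj, groupAct, act_act]

lemma groupAct_groupAct (g h : G) (m : M) :
    α.groupAct g (α.groupAct h m) = α.groupAct (g * h) m := by
  simp only [groupAct, LinearMap.sum_apply, map_sum, act_act, Finset.sum_ite_eq',
    Finset.mem_univ, if_true]
  exact (MulAut.conj g).toEquiv.sum_comp fun k => α.act (k, g * h) m

end DGAction

section

variable (αM : DGAction G M) (αN : DGAction G N)

lemma braidMap_tmul (m : M) (n : N) :
    braidMap αM αN (m ⊗ₜ n) = ∑ g : G, αN.proj g n ⊗ₜ αM.groupAct g m := by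
  simp [braidMap, DGAction.proj, DGAction.groupAct, LinearMap.sum_apply, TensorProduct.tmul_sum]

lemma braidMap_tmul_proj (m : M) (g : G) (n : N) :
    braidMap αM αN (m ⊗ₜ αN.proj g n) = αN.proj g n ⊗ₜ αM.groupAct g m := by
  simp [braidMap_tmul, DGAction.proj_proj, TensorProduct.ite_tmul]

lemma braidMap_groupAct_tmul_groupAct (g : G) (m : M) (n : N) :
    braidMap αM αN (αM.groupAct g m ⊗ₜ αN.groupAct g n) =
      TensorProduct.map (αN.groupAct g) (αM.groupAct g) (braidMap αM αN (m ⊗ₜ n)) := by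
  simp only [braidMap_tmul, map_sum, TensorProduct.map_tmul, DGAction.groupAct_proj,
    DGAction.groupAct_groupAct]
  -- reindex the grading by conjugation `a ↦ g a g⁻¹`
  rw [← (MulAut.conj g).toEquiv.sum_comp]
  simp [mul_assoc]

end

/-- Let `M`, `N`, `P` be left `D(G)`-modules.  The braiding maps `c` satisfy the braid
relation
`(c_{N,P} ⊗ id_M) ∘ (id_N ⊗ c_{M,P}) ∘ (c_{M,N} ⊗ id_P)
  = (id_P ⊗ c_{M,N}) ∘ (c_{M,P} ⊗ id_N) ∘ (id_M ⊗ c_{N,P})`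
as ℂ-linear maps `M ⊗ N ⊗ P → P ⊗ N ⊗ M` (with the standard associativity
identifications of iterated tensor products). -/
theorem braid_relation (αM : DGAction G M) (αN : DGAction G N) (αP : DGAction G P) :
    (TensorProduct.map (braidMap αN αP) (LinearMap.id : M →ₗ[ℂ] M)) ∘ₗ
        (TensorProduct.assoc ℂ N P M).symm.toLinearMap ∘ₗ
        (TensorProduct.map (LinearMap.id : N →ₗ[ℂ] N) (braidMap αM αP)) ∘ₗ
        (TensorProduct.assoc ℂ N M P).toLinearMap ∘ₗ
        (TensorProduct.map (braidMap αM αN) (LinearMap.id : P →ₗ[ℂ] P)) =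
      (TensorProduct.assoc ℂ P N M).symm.toLinearMap ∘ₗ
        (TensorProduct.map (LinearMap.id : P →ₗ[ℂ] P) (braidMap αM αN)) ∘ₗ
        (TensorProduct.assoc ℂ P M N).toLinearMap ∘ₗ
        (TensorProduct.map (braidMap αM αP) (LinearMap.id : N →ₗ[ℂ] N)) ∘ₗ
        (TensorProduct.assoc ℂ M P N).symm.toLinearMap ∘ₗ
        (TensorProduct.map (LinearMap.id : M →ₗ[ℂ] M) (braidMap αN αP)) ∘ₗ
        (TensorProduct.assoc ℂ M N P).toLinearMap := by
  refine TensorProduct.ext_threefold fun m n p => ?_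
  calc _ = ∑ a : G, ∑ b : G, (αP.proj b p ⊗ₜ αN.groupAct b (αN.proj a n)) ⊗ₜ
        αM.groupAct b (αM.groupAct a m) := by
        simp [braidMap_tmul, DGAction.proj_proj, TensorProduct.ite_tmul, TensorProduct.sum_tmul,
          TensorProduct.tmul_sum]
    _ = ∑ b : G, (TensorProduct.assoc ℂ P N M).symm (αP.proj b p ⊗ₜ
        TensorProduct.map (αN.groupAct b) (αM.groupAct b) (braidMap αM αN (m ⊗ₜ n))) := by
        rw [Finset.sum_comm]
        simp [braidMap_tmul, TensorProduct.tmul_sum]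
    _ = ∑ b : G, (TensorProduct.assoc ℂ P N M).symm (αP.proj b p ⊗ₜ
        braidMap αM αN (αM.groupAct b m ⊗ₜ αN.groupAct b n)) := by
        simp only [braidMap_groupAct_tmul_groupAct]
    _ = _ := by
        simp [braidMap_tmul, DGAction.proj_proj, TensorProduct.ite_tmul, TensorProduct.tmul_sum]

end QuantumDoubleStmt16
end
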